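/- Let a>0, c>0, N>0 and let n≥0 be an integer. Assume p_n, q_n exist for the weight ω_{n,N} and p_{n+1}, q_{n+1} exist for the weight ω_{n+1,N}, and that α_n·β_n ≠ 0, where α_n := p_n(0) and β_n := (1/(2πi))·∮_Γ p_n(w)·ω_{n,N}(w)·w^{−1} dw. Then for every z ∈ ℂ: p_{n+1}(z) = ( z + b_n·(1+β_n·γ_n)/(α_n·β_n) )·p_n(z) − b_n·q_n(z), where γ_n := q_n(0) and b_n := −(1/(2πi))·∮_Γ p_n(w)·w^n·ω_{n,N}(w) dw. -/

import Mathlib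

/-!
Put `Λ P = (2πi)⁻¹ ∮ P(w) ω_{n,N}(w) dw / w`. Because `ω_{n+1,N} = ω_{n,N} / w`, the defining
conditions of `p_n, q_n, p_{n+1}, q_{n+1}` all become conditions on the values `Λ (P X^j)`:
`p_{n+1}` is `Λ`-orthogonal to all polynomials of degree `≤ n`, `Λ (p_n X^j) = 0` for
`1 ≤ j ≤ n`, and `q_n`, `q_{n+1}` are dual to `X^n`. Computing `Λ (p_n q_n)` by expanding either
factor gives `α_n Λ(q_n) = 1 + β_n γ_n`, and with this the difference
`F = p_{n+1} - (X + b_n (1 + β_n γ_n) / (α_n β_n)) p_n + b_n q_n` has degree `≤ n` and is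
`Λ`-orthogonal to every polynomial of degree `≤ n`. Such an `F` vanishes: pairing it with `p_n`
(using `β_n ≠ 0`) kills its constant term, pairing with `q_{n+1}` its coefficient of `X^n`, and
then `F / X` is again orthogonal, so `F = 0` by descent on the degree.
-/

/-- The contour weight `ω_{n,N}(w) = w^{-n} e^{-Naw} exp(Nc Log(1-a/w))`. -/
noncomputable def omegaW (a c N : ℝ) (n : ℕ) (w : ℂ) : ℂ :=
  w ^ (-(n : ℤ)) * Complex.exp (-((N * a : ℝ) : ℂ) * w)
    * Complex.exp (((N * c : ℝ) : ℂ) * Complex.log (1 - (a : ℂ) / w))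

/-- `P` is the monic degree-`n` orthogonal polynomial for the weight `ω_{n,N}`
on the circle `|w| = R`. -/
def IsPn (a c N R : ℝ) (n : ℕ) (P : Polynomial ℂ) : Prop :=
  P.Monic ∧ P.natDegree = n ∧
    ∀ k : ℕ, k < n →
      circleIntegral (fun w => P.eval w * w ^ k * omegaW a c N n w) 0 R = 0

/-- `Q` is the second-kind polynomial of degree `≤ n-1` for the weight `ω_{n,N}`
on the circle `|w| = R`. -/
def IsQn (a c N R : ℝ) (n : ℕ) (Q : Polynomial ℂ) : Prop :=
  Q.degree < (n : WithBot ℕ) ∧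
    (∀ k : ℕ, k + 1 < n →
      circleIntegral (fun w => Q.eval w * w ^ k * omegaW a c N n w) 0 R = 0) ∧
    (-1 / (2 * (Real.pi : ℂ) * Complex.I))
      * circleIntegral (fun w => Q.eval w * w ^ ((n : ℤ) - 1) * omegaW a c N n w) 0 R = 1

/-- `β_n = (1/(2πi)) ∮ p_n(w) ω_{n,N}(w) w^{-1} dw`. -/
noncomputable def betaN (a c N R : ℝ) (n : ℕ) (P : Polynomial ℂ) : ℂ :=
  (1 / (2 * (Real.pi : ℂ) * Complex.I))
    * circleIntegral (fun w => P.eval w * omegaW a c N n w / w) 0 R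

/-- `b_n = -(1/(2πi)) ∮ p_n(w) w^n ω_{n,N}(w) dw`. -/
noncomputable def bSmallN (a c N R : ℝ) (n : ℕ) (P : Polynomial ℂ) : ℂ :=
  -((1 / (2 * (Real.pi : ℂ) * Complex.I))
    * circleIntegral (fun w => P.eval w * w ^ n * omegaW a c N n w) 0 R)

open Polynomial

section Orthogonality

variable {K : Type*} [Field K] (Λ : K[X] →ₗ[K] K) {n : ℕ}

def IsOrthogonalLE (n : ℕ) (S : K[X]) : Prop :=
  ∀ j ≤ n, Λ (S * X ^ j) = 0

lemma map_C_mul (r : K) (S : K[X]) : Λ (C r * S) = r * Λ S := by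
  rw [← smul_eq_C_mul, map_smul, smul_eq_mul]

lemma map_mul_eq_sum (S Q : K[X]) {m : ℕ} (hQ : Q.natDegree < m) :
    Λ (S * Q) = ∑ k ∈ Finset.range m, Q.coeff k * Λ (S * X ^ k) := by
  conv_lhs => rw [Q.as_sum_range_C_mul_X_pow' hQ]
  simp only [Finset.mul_sum, map_sum]
  refine Finset.sum_congr rfl fun k _ => ?_
  rw [mul_left_comm, map_C_mul]

lemma IsOrthogonalLE.map_mul_eq_zero {S Q : K[X]} (hS : IsOrthogonalLE Λ n S)
    (hQ : Q.natDegree ≤ n) : Λ (S * Q) = 0 := by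
  rw [map_mul_eq_sum Λ S Q (Nat.lt_succ_of_le hQ)]
  exact Finset.sum_eq_zero fun k hk => by
    rw [hS k (Nat.lt_succ_iff.mp (Finset.mem_range.mp hk)), mul_zero]

lemma map_mul_eq_of_forall_map_mul_X_pow_eq_zero (hn : 0 < n) {Q S : K[X]}
    (hQ : ∀ j, 0 < j → j < n → Λ (Q * X ^ j) = 0) (hS : S.natDegree ≤ n) :
    Λ (S * Q) = S.coeff 0 * Λ Q + S.coeff n * Λ (Q * X ^ n) := by
  obtain ⟨m, rfl⟩ := Nat.exists_eq_add_one_of_ne_zero hn.ne'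
  rw [mul_comm, map_mul_eq_sum Λ Q S (Nat.lt_succ_of_le hS), Finset.sum_range_succ,
    Finset.sum_range_succ', Finset.sum_eq_zero fun k hk => by
      rw [hQ (k + 1) k.succ_pos (by simpa using hk), mul_zero]]
  simp

section Uniqueness

variable {P Q S : K[X]}

lemma IsOrthogonalLE.coeff_zero_eq_zero (hn : 0 < n) (hPd : P.natDegree ≤ n)
    (hP : ∀ j, 0 < j → j ≤ n → Λ (P * X ^ j) = 0) (hPΛ : Λ P ≠ 0)
    (hS : IsOrthogonalLE Λ n S) (hSd : S.natDegree ≤ n) : S.coeff 0 = 0 := by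
  have h := map_mul_eq_of_forall_map_mul_X_pow_eq_zero Λ hn
    (fun j hj hjn => hP j hj hjn.le) hSd
  rw [hS.map_mul_eq_zero Λ hPd, hP n hn le_rfl, mul_zero, add_zero] at h
  exact (mul_eq_zero.mp h.symm).resolve_right hPΛ

lemma IsOrthogonalLE.coeff_eq_zero (hn : 0 < n) (hQd : Q.natDegree ≤ n)
    (hQ : ∀ j, 0 < j → j < n → Λ (Q * X ^ j) = 0) (hQΛ : Λ (Q * X ^ n) ≠ 0)
    (hS : IsOrthogonalLE Λ n S) (hSd : S.natDegree ≤ n) (hS₀ : S.coeff 0 = 0) :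
    S.coeff n = 0 := by
  have h := map_mul_eq_of_forall_map_mul_X_pow_eq_zero Λ hn hQ hSd
  rw [hS.map_mul_eq_zero Λ hQd, hS₀, zero_mul, zero_add] at h
  exact (mul_eq_zero.mp h.symm).resolve_right hQΛ

lemma IsOrthogonalLE.divX (hn : 0 < n) (hPd : P.natDegree = n)
    (hP : ∀ j, 0 < j → j ≤ n → Λ (P * X ^ j) = 0) (hPΛ : Λ P ≠ 0) (hQd : Q.natDegree ≤ n)
    (hQ : ∀ j, 0 < j → j < n → Λ (Q * X ^ j) = 0) (hQΛ : Λ (Q * X ^ n) ≠ 0)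
    (hS : IsOrthogonalLE Λ n S) (hSd : S.natDegree ≤ n) : IsOrthogonalLE Λ n S.divX := by
  set T := S.divX
  have hTX : T * X = S := by
    simpa [hS.coeff_zero_eq_zero Λ hn hPd.le hP hPΛ hSd] using S.divX_mul_X_add
  have hT : ∀ j, 0 < j → j ≤ n → Λ (T * X ^ j) = 0 := fun j hj hjn => by
    obtain ⟨i, rfl⟩ := Nat.exists_eq_add_one_of_ne_zero hj.ne'
    rw [pow_succ', ← mul_assoc, hTX]
    exact hS i (by omega)
  have hTd : T.natDegree ≤ n := natDegree_divX_le.trans hSd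
  have hTn : T.coeff n = 0 := by
    rw [coeff_divX]
    exact coeff_eq_zero_of_natDegree_lt (by omega)
  -- `Λ T` is read off the top coefficient of the Λ-orthogonal combination `Λ P • T - Λ T • P`
  set U := C (Λ P) * T - C (Λ T) * P
  have hU : IsOrthogonalLE Λ n U := fun j hjn => by
    simp only [U, sub_mul, mul_assoc, map_sub, map_C_mul]
    rcases j.eq_zero_or_pos with rfl | hj
    · simp only [pow_zero, mul_one]; ring
    · rw [hT j hj hjn, hP j hj hjn]; ring
  have hUd : U.natDegree ≤ n := by
    simpa using natDegree_sub_le_of_le (natDegree_C_mul_le (Λ P) T |>.trans hTd)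
      (natDegree_C_mul_le (Λ T) P |>.trans hPd.le)
  have hUn := hU.coeff_eq_zero Λ hn hQd hQ hQΛ hUd (hU.coeff_zero_eq_zero Λ hn hPd.le hP hPΛ hUd)
  have hPn : P.coeff n ≠ 0 := by
    rw [← hPd]
    exact leadingCoeff_ne_zero.mpr fun h => hPΛ (by rw [h, map_zero])
  have hTΛ : Λ T = 0 := by
    simp only [U, coeff_sub, coeff_C_mul, hTn, mul_zero, zero_sub, neg_eq_zero] at hUn
    exact (mul_eq_zero.mp hUn).resolve_right hPn
  intro j hjn
  rcases j.eq_zero_or_pos with rfl | hj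
  · rwa [pow_zero, mul_one]
  · exact hT j hj hjn

lemma IsOrthogonalLE.eq_zero (hn : 0 < n) (hPd : P.natDegree = n)
    (hP : ∀ j, 0 < j → j ≤ n → Λ (P * X ^ j) = 0) (hPΛ : Λ P ≠ 0) (hQd : Q.natDegree ≤ n)
    (hQ : ∀ j, 0 < j → j < n → Λ (Q * X ^ j) = 0) (hQΛ : Λ (Q * X ^ n) ≠ 0)
    (hS : IsOrthogonalLE Λ n S) (hSd : S.natDegree ≤ n) : S = 0 := by
  induction h : S.natDegree using Nat.strong_induction_on generalizing S with
  | _ d ih =>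
    have hS₀ := hS.coeff_zero_eq_zero Λ hn hPd.le hP hPΛ hSd
    rcases d.eq_zero_or_pos with rfl | hd
    · rw [eq_C_of_natDegree_eq_zero h, hS₀, map_zero]
    · have hT := ih _ (by rw [natDegree_divX_eq_natDegree_tsub_one, h]; omega)
        (hS.divX Λ hn hPd hP hPΛ hQd hQ hQΛ hSd) (natDegree_divX_le.trans hSd) rfl
      simpa [hT, hS₀] using S.divX_mul_X_add.symm

end Uniqueness

section Recurrence

variable {P Q P₁ Q₁ : K[X]}

lemma coeff_zero_mul_map_eq (hn : 0 < n) (hP : IsMonicOfDegree P n)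
    (hPo : ∀ j, 0 < j → j ≤ n → Λ (P * X ^ j) = 0) (hQd : Q.natDegree < n)
    (hQo : ∀ j, 0 < j → j < n → Λ (Q * X ^ j) = 0) (hQn : Λ (Q * X ^ n) = -1) :
    P.coeff 0 * Λ Q = 1 + Λ P * Q.coeff 0 := by
  have hPQ := map_mul_eq_of_forall_map_mul_X_pow_eq_zero Λ hn hQo hP.natDegree_eq.le
  have hQP := map_mul_eq_of_forall_map_mul_X_pow_eq_zero Λ hn
    (fun j hj hjn => hPo j hj hjn.le) hQd.le
  rw [hQn, ← hP.natDegree_eq, hP.monic.coeff_natDegree] at hPQ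
  rw [hPo n hn le_rfl, coeff_eq_zero_of_natDegree_lt hQd, mul_comm Q] at hQP
  linear_combination hQP - hPQ

theorem eq_X_add_C_mul_sub_C_mul (hn : 0 < n) {b : K} (hP : IsMonicOfDegree P n)
    (hPo : ∀ j, 0 < j → j ≤ n → Λ (P * X ^ j) = 0) (hPb : Λ (P * X ^ (n + 1)) = -b)
    (hQd : Q.natDegree < n) (hQo : ∀ j, 0 < j → j < n → Λ (Q * X ^ j) = 0)
    (hQn : Λ (Q * X ^ n) = -1) (hP₁ : IsMonicOfDegree P₁ (n + 1))
    (hP₁o : IsOrthogonalLE Λ n P₁) (hQ₁d : Q₁.natDegree ≤ n)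
    (hQ₁o : ∀ j, 0 < j → j < n → Λ (Q₁ * X ^ j) = 0) (hQ₁n : Λ (Q₁ * X ^ n) ≠ 0)
    (hα : P.coeff 0 ≠ 0) (hβ : Λ P ≠ 0) :
    P₁ = (X + C (b * (1 + Λ P * Q.coeff 0) / (P.coeff 0 * Λ P))) * P - C b * Q := by
  set d := b * (1 + Λ P * Q.coeff 0) / (P.coeff 0 * Λ P)
  have hd : d * Λ P = b * Λ Q := by
    simp only [d]
    rw [← coeff_zero_mul_map_eq Λ hn hP hPo hQd hQo hQn]
    field_simp
  set F := P₁ - X * P - C d * P + C b * Q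
  have hFd : F.natDegree ≤ n := by
    have hXP : IsMonicOfDegree (X * P) (n + 1) := by
      simpa [add_comm] using (isMonicOfDegree_X K).mul hP
    have h₁ : (P₁ - X * P).natDegree ≤ n :=
      Nat.le_of_lt_succ (hP₁.natDegree_sub_lt n.succ_ne_zero hXP)
    have h₂ : (C d * P).natDegree ≤ n := natDegree_C_mul_le d P |>.trans hP.natDegree_eq.le
    have h₃ : (C b * Q).natDegree ≤ n := natDegree_C_mul_le b Q |>.trans hQd.le
    exact natDegree_add_le_of_degree_le ((natDegree_sub_le_of_le h₁ h₂).trans (max_self n).le) h₃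
  have hF : IsOrthogonalLE Λ n F := fun j hjn => by
    simp only [F, add_mul, sub_mul, mul_assoc, map_add, map_sub, map_C_mul, hP₁o j hjn]
    rw [show X * (P * X ^ j) = P * X ^ (j + 1) by ring]
    rcases j.eq_zero_or_pos with rfl | hj
    · rw [zero_add, hPo 1 one_pos hn]
      simp only [pow_zero, mul_one]
      linear_combination -hd
    rcases hjn.lt_or_eq with hjn | rfl
    · rw [hPo (j + 1) (by omega) hjn, hPo j hj hjn.le, hQo j hj hjn]; ring
    · rw [hPb, hPo j hj le_rfl, hQn]; ring
  linear_combination hF.eq_zero Λ hn hP.natDegree_eq hPo hβ hQ₁d hQ₁o hQ₁n hFd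

end Recurrence

end Orthogonality

section CircleMoment

open Complex Metric

lemma CircleIntegrable.polynomial_eval_mul {f : ℂ → ℂ} {R : ℝ} (hf : CircleIntegrable f 0 R)
    (P : ℂ[X]) : CircleIntegrable (fun w => P.eval w * f w) 0 R :=
  hf.continuousOn_mul P.continuous.continuousOn

noncomputable def circleMoment {f : ℂ → ℂ} {R : ℝ} (hf : CircleIntegrable f 0 R) :
    ℂ[X] →ₗ[ℂ] ℂ where
  toFun P := (1 / (2 * (Real.pi : ℂ) * I)) * circleIntegral (fun w => P.eval w * f w) 0 R
  map_add' P Q := by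
    simp only [eval_add, add_mul]
    rw [circleIntegral.integral_add (hf.polynomial_eval_mul P) (hf.polynomial_eval_mul Q), mul_add]
  map_smul' r P := by
    simp only [eval_smul, smul_eq_mul, mul_assoc, circleIntegral.integral_const_mul,
      RingHom.id_apply]
    ring

lemma circleMoment_apply {f : ℂ → ℂ} {R : ℝ} (hf : CircleIntegrable f 0 R) (P : ℂ[X]) :
    circleMoment hf P
      = (1 / (2 * (Real.pi : ℂ) * I)) * circleIntegral (fun w => P.eval w * f w) 0 R :=
  rfl

end CircleMoment

section Weight

open Complex Metric

variable {a c N R : ℝ}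

lemma one_sub_div_mem_slitPlane (ha : 0 < a) (hR : a < R) {w : ℂ} (hw : w ∈ sphere 0 R) :
    1 - (a : ℂ) / w ∈ slitPlane := by
  rw [sub_eq_add_neg]
  refine mem_slitPlane_of_norm_lt_one ?_
  rw [norm_neg, norm_div, mem_sphere_zero_iff_norm.mp hw, norm_real, Real.norm_of_nonneg ha.le]
  exact (div_lt_one (ha.trans hR)).mpr hR

lemma continuousOn_omegaW (ha : 0 < a) (hR : a < R) (c N : ℝ) (n : ℕ) :
    ContinuousOn (omegaW a c N n) (sphere 0 R) := by
  have hw₀ : ∀ w ∈ sphere (0 : ℂ) R, w ≠ 0 := fun w hw =>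
    ne_zero_of_mem_sphere (ha.trans hR).ne' ⟨w, hw⟩
  unfold omegaW
  refine ((continuousOn_id.zpow₀ _ fun w hw => Or.inl (hw₀ w hw)).mul (by fun_prop)).mul ?_
  have hlog : ContinuousOn (fun w : ℂ => log (1 - a / w)) (sphere 0 R) :=
    (continuousOn_const.sub (continuousOn_const.div continuousOn_id hw₀)).clog
      fun w hw => one_sub_div_mem_slitPlane ha hR hw
  exact (continuousOn_const.mul hlog).cexp

lemma omegaW_succ {w : ℂ} (hw : w ≠ 0) (n : ℕ) :
    omegaW a c N (n + 1) w = omegaW a c N n w / w := by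
  simp only [omegaW, Nat.cast_succ, neg_add, zpow_add₀ hw, zpow_neg_one]
  ring

lemma circleIntegrable_omegaW_div (ha : 0 < a) (hR : a < R) (c N : ℝ) (n : ℕ) :
    CircleIntegrable (fun w => omegaW a c N n w / w) 0 R :=
  ((continuousOn_omegaW ha hR c N n).div continuousOn_id fun w hw =>
    ne_zero_of_mem_sphere (ha.trans hR).ne' ⟨w, hw⟩).circleIntegrable (ha.trans hR).le

noncomputable def omegaMoment (ha : 0 < a) (hR : a < R) (c N : ℝ) (n : ℕ) : ℂ[X] →ₗ[ℂ] ℂ :=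
  circleMoment (circleIntegrable_omegaW_div ha hR c N n)

lemma omegaMoment_mul_X_pow_succ (ha : 0 < a) (hR : a < R) (n : ℕ) (P : ℂ[X]) (k : ℕ) :
    omegaMoment ha hR c N n (P * X ^ (k + 1))
      = (1 / (2 * (Real.pi : ℂ) * I))
        * circleIntegral (fun w => P.eval w * w ^ k * omegaW a c N n w) 0 R := by
  rw [omegaMoment, circleMoment_apply]
  congr 1
  refine circleIntegral.integral_congr (ha.trans hR).le fun w hw => ?_
  have hw₀ : w ≠ 0 := ne_zero_of_mem_sphere (ha.trans hR).ne' ⟨w, hw⟩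
  simp only [eval_mul, eval_pow, eval_X]
  field_simp
  ring

lemma omegaMoment_succ_mul_X (ha : 0 < a) (hR : a < R) (n : ℕ) (P : ℂ[X]) :
    omegaMoment ha hR c N (n + 1) (P * X) = omegaMoment ha hR c N n P := by
  rw [omegaMoment, omegaMoment, circleMoment_apply, circleMoment_apply]
  congr 1
  refine circleIntegral.integral_congr (ha.trans hR).le fun w hw => ?_
  have hw₀ : w ≠ 0 := ne_zero_of_mem_sphere (ha.trans hR).ne' ⟨w, hw⟩
  simp only [eval_mul, eval_X, omegaW_succ hw₀]
  field_simp

lemma omegaMoment_mul_X_pow_eq_succ (ha : 0 < a) (hR : a < R) (n : ℕ) (P : ℂ[X]) (j : ℕ) :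
    omegaMoment ha hR c N n (P * X ^ j) = omegaMoment ha hR c N (n + 1) (P * X ^ (j + 1)) := by
  rw [pow_succ, ← mul_assoc, omegaMoment_succ_mul_X]

end Weight

section OrthogonalPolynomials

open Complex

variable {a c N R : ℝ} {n : ℕ} {P Q : ℂ[X]}

lemma IsPn.isMonicOfDegree (hP : IsPn a c N R n P) : IsMonicOfDegree P n :=
  ⟨hP.2.1, hP.1⟩

lemma IsPn.omegaMoment_mul_X_pow (ha : 0 < a) (hR : a < R) (hP : IsPn a c N R n P) {j : ℕ}
    (hj : 0 < j) (hjn : j ≤ n) : omegaMoment ha hR c N n (P * X ^ j) = 0 := by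
  obtain ⟨k, rfl⟩ := Nat.exists_eq_add_one_of_ne_zero hj.ne'
  rw [omegaMoment_mul_X_pow_succ, hP.2.2 k hjn, mul_zero]

lemma IsPn.isOrthogonalLE_of_succ (ha : 0 < a) (hR : a < R) (hP : IsPn a c N R (n + 1) P) :
    IsOrthogonalLE (omegaMoment ha hR c N n) n P := fun j hjn => by
  rw [omegaMoment_mul_X_pow_eq_succ, hP.omegaMoment_mul_X_pow ha hR j.succ_pos (by omega)]

lemma IsQn.pos (hQ : IsQn a c N R n Q) : 0 < n := by
  obtain ⟨hQd, -, hQn⟩ := hQ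
  refine Nat.pos_of_ne_zero fun hn => ?_
  subst hn
  rw [Nat.cast_zero, Nat.WithBot.lt_zero_iff, degree_eq_bot] at hQd
  simp [hQd, circleIntegral] at hQn

lemma IsQn.natDegree_lt (hQ : IsQn a c N R n Q) : Q.natDegree < n := by
  rcases eq_or_ne Q 0 with rfl | hQ₀
  · simpa using hQ.pos
  · exact (natDegree_lt_iff_degree_lt hQ₀).mpr hQ.1

lemma IsQn.omegaMoment_mul_X_pow (ha : 0 < a) (hR : a < R) (hQ : IsQn a c N R n Q) {j : ℕ}
    (hj : 0 < j) (hjn : j < n) : omegaMoment ha hR c N n (Q * X ^ j) = 0 := by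
  obtain ⟨k, rfl⟩ := Nat.exists_eq_add_one_of_ne_zero hj.ne'
  rw [omegaMoment_mul_X_pow_succ, hQ.2.1 k hjn, mul_zero]

lemma IsQn.omegaMoment_mul_X_pow_self (ha : 0 < a) (hR : a < R) (hQ : IsQn a c N R n Q) :
    omegaMoment ha hR c N n (Q * X ^ n) = -1 := by
  obtain ⟨k, rfl⟩ := Nat.exists_eq_add_one_of_ne_zero hQ.pos.ne'
  have hQn := hQ.2.2
  rw [Nat.cast_succ, add_sub_cancel_right] at hQn
  simp only [zpow_natCast] at hQn
  rw [omegaMoment_mul_X_pow_succ]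
  linear_combination -hQn

lemma IsQn.omegaMoment_mul_X_pow_of_succ (ha : 0 < a) (hR : a < R)
    (hQ : IsQn a c N R (n + 1) Q) {j : ℕ} (hjn : j < n) :
    omegaMoment ha hR c N n (Q * X ^ j) = 0 := by
  rw [omegaMoment_mul_X_pow_eq_succ, hQ.omegaMoment_mul_X_pow ha hR j.succ_pos (by omega)]

lemma IsQn.omegaMoment_mul_X_pow_self_of_succ (ha : 0 < a) (hR : a < R)
    (hQ : IsQn a c N R (n + 1) Q) : omegaMoment ha hR c N n (Q * X ^ n) = -1 := by
  rw [omegaMoment_mul_X_pow_eq_succ, hQ.omegaMoment_mul_X_pow_self]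

lemma betaN_eq_omegaMoment (ha : 0 < a) (hR : a < R) (P : ℂ[X]) :
    betaN a c N R n P = omegaMoment ha hR c N n P := by
  simp only [betaN, omegaMoment, circleMoment_apply, mul_div_assoc]

lemma omegaMoment_mul_X_pow_succ_eq_neg_bSmallN (ha : 0 < a) (hR : a < R) (P : ℂ[X]) :
    omegaMoment ha hR c N n (P * X ^ (n + 1)) = -bSmallN a c N R n P := by
  rw [bSmallN, omegaMoment_mul_X_pow_succ, neg_neg]

end OrthogonalPolynomials

theorem statement2_general
    (a c N R : ℝ) (ha : 0 < a) (hR : a < R)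
    (n : ℕ)
    (pn qn pn1 qn1 : Polynomial ℂ)
    (hpn : IsPn a c N R n pn) (hqn : IsQn a c N R n qn)
    (hpn1 : IsPn a c N R (n + 1) pn1) (hqn1 : IsQn a c N R (n + 1) qn1)
    (hαβ : pn.eval 0 * betaN a c N R n pn ≠ 0) :
    ∀ z : ℂ, pn1.eval z =
      (z + bSmallN a c N R n pn * (1 + betaN a c N R n pn * qn.eval 0)
          / (pn.eval 0 * betaN a c N R n pn)) * pn.eval z
        - bSmallN a c N R n pn * qn.eval z := by
  have hn := hqn.pos
  rw [betaN_eq_omegaMoment ha hR] at hαβ ⊢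
  rw [← coeff_zero_eq_eval_zero] at hαβ
  have hrec := eq_X_add_C_mul_sub_C_mul (omegaMoment ha hR c N n) hn hpn.isMonicOfDegree
    (fun j hj hjn => hpn.omegaMoment_mul_X_pow ha hR hj hjn)
    (omegaMoment_mul_X_pow_succ_eq_neg_bSmallN ha hR pn) hqn.natDegree_lt
    (fun j hj hjn => hqn.omegaMoment_mul_X_pow ha hR hj hjn)
    (hqn.omegaMoment_mul_X_pow_self ha hR) hpn1.isMonicOfDegree
    (hpn1.isOrthogonalLE_of_succ ha hR) (Nat.lt_succ_iff.mp hqn1.natDegree_lt)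
    (fun j _ hjn => hqn1.omegaMoment_mul_X_pow_of_succ ha hR hjn)
    (by rw [hqn1.omegaMoment_mul_X_pow_self_of_succ ha hR]; exact neg_ne_zero.mpr one_ne_zero)
    (left_ne_zero_of_mul hαβ) (right_ne_zero_of_mul hαβ)
  intro z
  simpa only [eval_sub, eval_mul, eval_add, eval_X, eval_C, coeff_zero_eq_eval_zero] using
    congrArg (eval z) hrec

/-- `p_{n+1}(z) = (z + b_n (1 + β_n γ_n)/(α_n β_n)) p_n(z) - b_n q_n(z)`. -/
theorem statement2
    (a c N R : ℝ) (ha : 0 < a) (hc : 0 < c) (hN : 0 < N) (hR : a < R)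
    (n : ℕ)
    (pn qn pn1 qn1 : Polynomial ℂ)
    (hpn : IsPn a c N R n pn) (hqn : IsQn a c N R n qn)
    (hpn1 : IsPn a c N R (n + 1) pn1) (hqn1 : IsQn a c N R (n + 1) qn1)
    (hαβ : pn.eval 0 * betaN a c N R n pn ≠ 0) :
    ∀ z : ℂ, pn1.eval z =
      (z + bSmallN a c N R n pn * (1 + betaN a c N R n pn * qn.eval 0)
          / (pn.eval 0 * betaN a c N R n pn)) * pn.eval z
        - bSmallN a c N R n pn * qn.eval z :=
  statement2_general a c N R ha hR n pn qn pn1 qn1 hpn hqn hpn1 hqn1 hαβ
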